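/- arXiv:1711.01500 — 3 statements merged into one kernel-verified Lean document; each statement's English description precedes it below -/
import Mathlib

section
/- Let G be a profinite group such that for every open normal subgroup N of G, every Sylow subgroup of the finite group G/N is cyclic. Then the closure of the commutator subgroup [G,G] in G is procyclic, and the quotient of G by this closure is procyclic. -/
/-!
For an open normal subgroup `N` of `G`, the finite group `G ⧸ N` is a Z-group, so its commutator
subgroup and its abelianization are cyclic. Since `G ⧸ N` is discrete, the closure of `[G, G]` maps
into `[G ⧸ N, G ⧸ N]`, which makes `closure [G, G] ⧸ (N ∩ closure [G, G])` cyclic; and the quotient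
of `G ⧸ closure [G, G]` by the image of `N` is an abelian quotient of `G ⧸ N`, hence cyclic.
So both groups have cyclic quotients by arbitrarily small open normal subgroups. A compact group
with this property is procyclic: the elements generating it modulo such an `N` form closed,
nonempty, directed sets; by compactness some `g` lies in all of them, and `⟨g⟩` is dense.
-/

def IsProcyclic (G : Type*) [Group G] [TopologicalSpace G] : Prop :=
  ∃ g : G, closure ((Subgroup.zpowers g : Subgroup G) : Set G) = Set.univ

instance commutatorTopologicalClosureNormal {G : Type*} [Group G] [TopologicalSpace G]
    [IsTopologicalGroup G] : ((commutator G).topologicalClosure).Normal :=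
  Subgroup.is_normal_topologicalClosure _

open Subgroup Topology

section Algebra

variable {G : Type*} [Group G]

theorem Subgroup.zpowers_sup_eq_top_iff (N : Subgroup G) [N.Normal] (g : G) :
    zpowers g ⊔ N = ⊤ ↔ zpowers (g : G ⧸ N) = ⊤ := by
  have h := comap_map_eq (QuotientGroup.mk' N) (zpowers g)
  rw [QuotientGroup.ker_mk', MonoidHom.map_zpowers] at h
  rw [← h, ← comap_top (QuotientGroup.mk' N),
    (comap_injective (QuotientGroup.mk'_surjective N)).eq_iff]
  rfl

theorem Subgroup.exists_zpowers_sup_eq_top (N : Subgroup G) [N.Normal] [IsCyclic (G ⧸ N)] :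
    ∃ g : G, zpowers g ⊔ N = ⊤ := by
  obtain ⟨c, hc⟩ := isCyclic_iff_exists_zpowers_eq_top.mp ‹IsCyclic (G ⧸ N)›
  obtain ⟨g, rfl⟩ := QuotientGroup.mk_surjective c
  exact ⟨g, (zpowers_sup_eq_top_iff N g).mpr hc⟩

theorem isCyclic_quotient_subgroupOf_of_le_comap {K N : Subgroup G} [N.Normal]
    {C : Subgroup (G ⧸ N)} [IsCyclic C] (h : K ≤ C.comap (QuotientGroup.mk' N)) :
    IsCyclic (K ⧸ N.subgroupOf K) := by
  let f := (QuotientGroup.mk' N).comp K.subtype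
  have hker : N.subgroupOf K = f.ker := by
    rw [← MonoidHom.comap_ker, QuotientGroup.ker_mk']
    rfl
  have : IsCyclic f.range := isCyclic_of_le <| by
    rwa [MonoidHom.range_comp, range_subtype, map_le_iff_le_comap]
  exact isCyclic_of_surjective ((QuotientGroup.quotientMulEquivOfEq hker).trans
    (QuotientGroup.quotientKerEquivRange f)).symm (MulEquiv.surjective _)

theorem commutator_le_comap_commutator {D : Type*} [Group D] (f : G →* D) :
    commutator G ≤ (commutator D).comap f := by
  rw [← map_le_iff_le_comap, commutator_def, commutator_def, map_commutator]
  exact commutator_mono le_top le_top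

open scoped IsMulCommutative in
theorem IsZGroup.isCyclic_of_isMulCommutative [Finite G] [IsZGroup G] [IsMulCommutative G] :
    IsCyclic G :=
  inferInstance

end Algebra

section Topology

variable {H : Type*} [Group H] [TopologicalSpace H] [IsTopologicalGroup H]

theorem Subgroup.topologicalClosure_le_comap_of_discreteTopology {D : Type*} [Group D]
    [TopologicalSpace D] [DiscreteTopology D] {f : H →* D} (hf : Continuous f) {K : Subgroup H}
    {L : Subgroup D} (h : K ≤ L.comap f) : K.topologicalClosure ≤ L.comap f :=
  topologicalClosure_minimal K h ((isClosed_discrete _).preimage hf)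

theorem isClosed_setOf_zpowers_sup_eq_top {N : Subgroup H} [N.Normal] (hN : IsOpen (N : Set H)) :
    IsClosed {g : H | zpowers g ⊔ N = ⊤} := by
  have := QuotientGroup.discreteTopology hN
  simp_rw [zpowers_sup_eq_top_iff]
  exact (isClosed_discrete {c : H ⧸ N | zpowers c = ⊤}).preimage QuotientGroup.continuous_mk

theorem Subgroup.dense_of_forall_mem_nhds_one_sup_eq_top {K : Subgroup H}
    (h : ∀ U ∈ 𝓝 (1 : H), ∃ N : Subgroup H, N.Normal ∧ (N : Set H) ⊆ U ∧ K ⊔ N = ⊤) :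
    Dense (K : Set H) := by
  intro x
  rw [mem_closure_iff_nhds]
  intro t ht
  have hU : (x * ·) ⁻¹' t ∈ 𝓝 (1 : H) :=
    (continuous_const_mul x).continuousAt.preimage_mem_nhds (by rwa [mul_one])
  obtain ⟨N, hN, hNU, hKN⟩ := h _ hU
  obtain ⟨k, hk, n, hn, rfl⟩ := mem_sup_of_normal_right.mp (hKN ▸ mem_top x)
  refine ⟨k, ?_, hk⟩
  simpa using hNU (N.inv_mem hn)

theorem isProcyclic_of_forall_mem_nhds_one [CompactSpace H]
    (h : ∀ U ∈ 𝓝 (1 : H), ∃ (N : Subgroup H) (_ : N.Normal),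
      IsOpen (N : Set H) ∧ (N : Set H) ⊆ U ∧ IsCyclic (H ⧸ N)) :
    IsProcyclic H := by
  let ι := {N : Subgroup H // N.Normal ∧ IsOpen (N : Set H) ∧ ∃ g : H, zpowers g ⊔ N = ⊤}
  let T (N : ι) : Set H := {g | zpowers g ⊔ N.1 = ⊤}
  have hι : ∀ U ∈ 𝓝 (1 : H), ∃ N : ι, (N.1 : Set H) ⊆ U := fun U hU ↦ by
    obtain ⟨N, _, hNo, hNU, _⟩ := h U hU
    exact ⟨⟨N, inferInstance, hNo, exists_zpowers_sup_eq_top N⟩, hNU⟩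
  have : Nonempty ι := (hι _ Filter.univ_mem).nonempty
  have hT : Directed (· ⊇ ·) T := fun i j ↦ by
    obtain ⟨N, hN⟩ := hι _ (Filter.inter_mem (i.2.2.1.mem_nhds i.1.one_mem)
      (j.2.2.1.mem_nhds j.1.one_mem))
    exact ⟨N, fun g ↦ eq_top_mono (sup_le_sup_left (fun x hx ↦ (hN hx).1) _),
      fun g ↦ eq_top_mono (sup_le_sup_left (fun x hx ↦ (hN hx).2) _)⟩
  have hTc (N : ι) : IsClosed (T N) := have := N.2.1; isClosed_setOf_zpowers_sup_eq_top N.2.2.1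
  obtain ⟨g, hg⟩ := IsCompact.nonempty_iInter_of_directed_nonempty_isCompact_isClosed T hT
    (fun N ↦ N.2.2.2) (fun N ↦ (hTc N).isCompact) hTc
  refine ⟨g, dense_iff_closure_eq.mp (dense_of_forall_mem_nhds_one_sup_eq_top fun U hU ↦ ?_)⟩
  obtain ⟨N, hNU⟩ := hι U hU
  exact ⟨N.1, N.2.1, hNU, Set.mem_iInter.mp hg N⟩

end Topology

section Profinite

variable {G : Type*} [Group G] [TopologicalSpace G] [IsTopologicalGroup G] [CompactSpace G]
  [TotallyDisconnectedSpace G]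

theorem exists_openNormalSubgroup_subset_of_mem_nhds_one {U : Set G} (hU : U ∈ 𝓝 (1 : G)) :
    ∃ N : OpenNormalSubgroup G, (N : Set G) ⊆ U := by
  obtain ⟨V, hVU, hV, h1V⟩ := mem_nhds_iff.mp hU
  obtain ⟨N, hN⟩ := ProfiniteGrp.exist_openNormalSubgroup_sub_open_nhds_of_one hV h1V
  exact ⟨N, hN.trans hVU⟩

theorem isProcyclic_topologicalClosure_commutator
    (hG : ∀ N : OpenNormalSubgroup G, IsZGroup (G ⧸ (N : Subgroup G))) :
    IsProcyclic (commutator G).topologicalClosure := by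
  set Hc := (commutator G).topologicalClosure
  have : CompactSpace Hc := isCompact_iff_compactSpace.mp (isClosed_topologicalClosure _).isCompact
  refine isProcyclic_of_forall_mem_nhds_one fun U hU ↦ ?_
  rw [nhds_subtype_eq_comap, Filter.mem_comap] at hU
  obtain ⟨V, hV, hVU⟩ := hU
  obtain ⟨N, hNV⟩ := exists_openNormalSubgroup_subset_of_mem_nhds_one hV
  have : Finite (G ⧸ (N : Subgroup G)) := quotient_finite_of_isOpen (N : Subgroup G) N.isOpen
  have := hG N
  have := QuotientGroup.discreteTopology N.isOpen
  refine ⟨(N : Subgroup G).subgroupOf Hc, inferInstance, subgroupOf_isOpen _ _ N.isOpen,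
    fun x hx ↦ hVU (hNV hx), ?_⟩
  have := IsZGroup.isCyclic_commutator (G ⧸ (N : Subgroup G))
  exact isCyclic_quotient_subgroupOf_of_le_comap
    (topologicalClosure_le_comap_of_discreteTopology QuotientGroup.continuous_mk
      (commutator_le_comap_commutator _))

theorem isProcyclic_quotient_topologicalClosure_commutator
    (hG : ∀ N : OpenNormalSubgroup G, IsZGroup (G ⧸ (N : Subgroup G))) :
    IsProcyclic (G ⧸ (commutator G).topologicalClosure) := by
  set Hc := (commutator G).topologicalClosure
  refine isProcyclic_of_forall_mem_nhds_one fun U hU ↦ ?_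
  obtain ⟨N, hNU⟩ := exists_openNormalSubgroup_subset_of_mem_nhds_one
    (QuotientGroup.continuous_mk.continuousAt.preimage_mem_nhds hU)
  have : Finite (G ⧸ (N : Subgroup G)) := quotient_finite_of_isOpen (N : Subgroup G) N.isOpen
  have := hG N
  set M := (N : Subgroup G).map (QuotientGroup.mk' Hc)
  have hMo : IsOpen (M : Set (G ⧸ Hc)) := QuotientGroup.isOpenMap_coe _ N.isOpen
  have : M.Normal := Normal.map inferInstance _ (QuotientGroup.mk'_surjective Hc)
  refine ⟨M, inferInstance, hMo, Set.image_subset_iff.mpr hNU, ?_⟩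
  have : Finite ((G ⧸ Hc) ⧸ M) := quotient_finite_of_isOpen _ hMo
  have : IsZGroup ((G ⧸ Hc) ⧸ M) := IsZGroup.of_surjective
    (QuotientGroup.map_surjective_of_surjective _ M (QuotientGroup.mk' Hc)
      ((QuotientGroup.mk'_surjective M).comp (QuotientGroup.mk'_surjective Hc)) (le_comap_map _ _))
  have : IsMulCommutative (G ⧸ Hc) :=
    Normal.quotient_commutative_iff_commutator_le.mpr (le_topologicalClosure _)
  have : IsMulCommutative ((G ⧸ Hc) ⧸ M) :=
    (QuotientGroup.mk'_surjective M).mul_comm (f := (QuotientGroup.mk' M : _ →ₙ* _)) this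
  exact IsZGroup.isCyclic_of_isMulCommutative

end Profinite

theorem procyclic_commutator_closure_of_cyclic_sylows_general
    (G : Type) [Group G] [TopologicalSpace G] [IsTopologicalGroup G]
    [CompactSpace G] [TotallyDisconnectedSpace G]
    (h : ∀ (N : Subgroup G) [N.Normal], IsOpen (N : Set G) →
      ∀ (p : ℕ) [Fact p.Prime], ∀ P : Sylow p (G ⧸ N), IsCyclic (P : Subgroup (G ⧸ N))) :
    IsProcyclic ((commutator G).topologicalClosure) ∧
      IsProcyclic (G ⧸ (commutator G).topologicalClosure) := by
  have hG (N : OpenNormalSubgroup G) : IsZGroup (G ⧸ (N : Subgroup G)) :=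
    ⟨fun p hp P ↦ @h N _ N.isOpen p ⟨hp⟩ P⟩
  exact ⟨isProcyclic_topologicalClosure_commutator hG,
    isProcyclic_quotient_topologicalClosure_commutator hG⟩

/-- If all Sylow subgroups of all the (finite) continuous quotients of a profinite group `G`
are cyclic, then the closure of the commutator subgroup of `G` is procyclic and the quotient
of `G` by it is procyclic. -/
theorem procyclic_commutator_closure_of_cyclic_sylows
    (G : Type) [Group G] [TopologicalSpace G] [IsTopologicalGroup G]
    [CompactSpace G] [T2Space G] [TotallyDisconnectedSpace G]
    (h : ∀ (N : Subgroup G) [N.Normal], IsOpen (N : Set G) →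
      ∀ (p : ℕ) [Fact p.Prime], ∀ P : Sylow p (G ⧸ N), IsCyclic (P : Subgroup (G ⧸ N))) :
    IsProcyclic ((commutator G).topologicalClosure) ∧
      IsProcyclic (G ⧸ (commutator G).topologicalClosure) :=
  procyclic_commutator_closure_of_cyclic_sylows_general G h
end

section
/- Let G be a profinite group such that for every open normal subgroup N of G, the finite group G/N is nilpotent and all of its Sylow subgroups are cyclic. Then G is procyclic. -/
open Subgroup

section QuotientGenerators

variable {G : Type*} [Group G]

theorem zpowers_mk_eq_top_of_le {M N : Subgroup G} [M.Normal] [N.Normal] (hMN : M ≤ N) {g : G}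
    (hg : zpowers (g : G ⧸ M) = ⊤) : zpowers (g : G ⧸ N) = ⊤ := by
  let φ : G ⧸ M →* G ⧸ N := QuotientGroup.map M N (MonoidHom.id G) hMN
  have hφ : Function.Surjective φ :=
    QuotientGroup.map_surjective_of_surjective M N (MonoidHom.id G)
      QuotientGroup.mk_surjective hMN
  have := congrArg (map φ) hg
  rwa [MonoidHom.map_zpowers, map_top_of_surjective _ hφ] at this

variable [TopologicalSpace G] [IsTopologicalGroup G]

theorem isClosed_setOf_zpowers_mk_eq_top (N : Subgroup G) [N.Normal] (hN : IsOpen (N : Set G)) :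
    IsClosed {g : G | zpowers (g : G ⧸ N) = ⊤} :=
  have : DiscreteTopology (G ⧸ N) := QuotientGroup.discreteTopology hN
  (isClosed_discrete {x : G ⧸ N | zpowers x = ⊤}).preimage QuotientGroup.continuous_mk

theorem exists_forall_zpowers_mk_eq_top [CompactSpace G]
    (h : ∀ N : OpenNormalSubgroup G, IsCyclic (G ⧸ (N : Subgroup G))) :
    ∃ g : G, ∀ N : OpenNormalSubgroup G, zpowers (g : G ⧸ (N : Subgroup G)) = ⊤ := by
  let S (N : OpenNormalSubgroup G) : Set G := {g | zpowers (g : G ⧸ (N : Subgroup G)) = ⊤}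
  have hclosed (N : OpenNormalSubgroup G) : IsClosed (S N) :=
    isClosed_setOf_zpowers_mk_eq_top (N : Subgroup G) N.isOpen
  have hnonempty (N : OpenNormalSubgroup G) : (S N).Nonempty := by
    obtain ⟨x, hx⟩ := (h N).exists_generator
    obtain ⟨g, rfl⟩ := QuotientGroup.mk_surjective x
    exact ⟨g, (eq_top_iff' _).mpr hx⟩
  have hdirected : Directed (· ⊇ ·) S := fun M N =>
    ⟨M ⊓ N, fun _ => zpowers_mk_eq_top_of_le (inf_le_left : M ⊓ N ≤ M),
      fun _ => zpowers_mk_eq_top_of_le (inf_le_right : M ⊓ N ≤ N)⟩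
  have : Nonempty (OpenNormalSubgroup G) := ⟨{ toOpenSubgroup := ⊤, isNormal' := normal_top }⟩
  obtain ⟨g, hg⟩ := IsCompact.nonempty_iInter_of_directed_nonempty_isCompact_isClosed S
    hdirected hnonempty (fun N => (hclosed N).isCompact) hclosed
  exact ⟨g, Set.mem_iInter.mp hg⟩

variable [CompactSpace G] [TotallyDisconnectedSpace G]

theorem dense_zpowers_of_forall_zpowers_mk_eq_top {g : G}
    (hg : ∀ N : OpenNormalSubgroup G, zpowers (g : G ⧸ (N : Subgroup G)) = ⊤) :
    Dense (zpowers g : Set G) := by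
  refine dense_iff_inter_open.mpr fun U hU ⟨x, hxU⟩ => ?_
  obtain ⟨N, hN⟩ := ProfiniteGrp.exist_openNormalSubgroup_sub_open_nhds_of_one
    (hU.preimage (continuous_const_mul x)) (by simpa using hxU)
  obtain ⟨n, hn⟩ := mem_zpowers_iff.mp ((hg N).ge (mem_top (x : G ⧸ (N : Subgroup G))))
  rw [← QuotientGroup.mk_zpow] at hn
  exact ⟨g ^ n, by simpa using hN (QuotientGroup.eq.mp hn.symm), zpow_mem_zpowers g n⟩

theorem isProcyclic_of_forall_isCyclic_quotient
    (h : ∀ N : OpenNormalSubgroup G, IsCyclic (G ⧸ (N : Subgroup G))) : IsProcyclic G :=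
  let ⟨_, hg⟩ := exists_forall_zpowers_mk_eq_top h
  ⟨_, (dense_zpowers_of_forall_zpowers_mk_eq_top hg).closure_eq⟩

end QuotientGenerators

theorem procyclic_of_nilpotent_quotients_with_cyclic_sylows_general
    (G : Type) [Group G] [TopologicalSpace G] [IsTopologicalGroup G]
    [CompactSpace G] [TotallyDisconnectedSpace G]
    (h : ∀ (N : Subgroup G) [N.Normal], IsOpen (N : Set G) →
      Group.IsNilpotent (G ⧸ N) ∧
      ∀ (p : ℕ) [Fact p.Prime], ∀ P : Sylow p (G ⧸ N), IsCyclic (P : Subgroup (G ⧸ N))) :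
    IsProcyclic G := by
  refine isProcyclic_of_forall_isCyclic_quotient fun N => ?_
  have : Finite (G ⧸ (N : Subgroup G)) := quotient_finite_of_isOpen _ N.isOpen
  obtain ⟨hnilpotent, hsylow⟩ := h N N.isOpen
  have : IsZGroup (G ⧸ (N : Subgroup G)) := ⟨fun p hp P => have := Fact.mk hp; hsylow p P⟩
  -- a finite nilpotent Z-group is cyclic
  infer_instance

/-- A profinite group all of whose (finite) continuous quotients are nilpotent with cyclic
Sylow subgroups is procyclic. -/
theorem procyclic_of_nilpotent_quotients_with_cyclic_sylows
    (G : Type) [Group G] [TopologicalSpace G] [IsTopologicalGroup G]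
    [CompactSpace G] [T2Space G] [TotallyDisconnectedSpace G]
    (h : ∀ (N : Subgroup G) [N.Normal], IsOpen (N : Set G) →
      Group.IsNilpotent (G ⧸ N) ∧
      ∀ (p : ℕ) [Fact p.Prime], ∀ P : Sylow p (G ⧸ N), IsCyclic (P : Subgroup (G ⧸ N))) :
    IsProcyclic G :=
  procyclic_of_nilpotent_quotients_with_cyclic_sylows_general G h
end

section
/- Let N be a group, N' a subgroup of N, q ≥ 1 an integer, and M a finite abelian group regarded as a trivial module over both N and N'. Assume that the integral homology groups H_q(N, ℤ), H_{q−1}(N, ℤ), H_q(N', ℤ), and H_{q−1}(N', ℤ) are finitely generated abelian groups. If the restriction map H^q(N, M) → H^q(N', M) on group cohomology is the zero map, then the map H_q(N', M) → H_q(N, M) on group homology induced by the inclusion N' ⊆ N is the zero map. -/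
/-!
Pairing an `A`-valued cochain `f` with an `M`-valued chain by `(f, m • [g]) ↦ e (f g) m`, for
`e : A ≃+ Hom(M, ℚ/ℤ)`, identifies invariant cochains with characters of the coinvariant chains;
under it the coboundary is dual to the boundary and restriction is dual to corestriction. As
`ℚ/ℤ` is injective, every character of `H_q(G, M)` extends to a character of the coinvariant
chains killing the boundaries, i.e. it comes from a cocycle. If restriction makes that cocycle a
coboundary, the character vanishes on the image of corestriction; since characters separate
points, that image is zero. A finite abelian group `M` is isomorphic to `Hom(M, ℚ/ℤ)` by the
structure theorem, so one may take `A = M`.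
-/

/-- The group structure on `AddAut M` (composition) that older Mathlib provided as
`AddAut.group`; current Mathlib only gives `AddAut M` an additive group structure. -/
instance AddAut.group (A : Type*) [Add A] : Group (AddAut A) where
  mul g h := AddEquiv.trans h g
  one := AddEquiv.refl _
  inv := AddEquiv.symm
  mul_assoc _ _ _ := rfl
  one_mul _ := rfl
  mul_one _ := rfl
  inv_mul_cancel := AddEquiv.self_trans_symm

section HomogeneousResolution

variable {G G' : Type} [Group G] [Group G'] {M : Type} [AddCommGroup M]

/-! ### Cochains -/

/-- The differential on homogeneous cochains. -/
def cochainD (G : Type) [Group G] (M : Type) [AddCommGroup M] (q : ℕ) :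
    ((Fin (q + 1) → G) → M) →+ ((Fin (q + 2) → G) → M) where
  toFun f g := ∑ i : Fin (q + 2), (-1 : ℤ) ^ (i : ℕ) • f (g ∘ i.succAbove)
  map_zero' := by funext g; simp
  map_add' a b := by
    funext g
    simp [smul_add, Finset.sum_add_distrib]

/-- Homogeneous equivariant cochains. -/
def eqCochain (ρ : G →* AddAut M) (q : ℕ) : AddSubgroup ((Fin (q + 1) → G) → M) where
  carrier := {f | ∀ (n : G) (g : Fin (q + 1) → G), f (fun i => n * g i) = ρ n (f g)}
  zero_mem' := by intro n g; simp
  add_mem' := by intro a b ha hb n g; simp [ha n g, hb n g]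
  neg_mem' := by intro a ha n g; simp [ha n g]

/-- Cocycles: equivariant cochains killed by the differential. -/
def cocycles (ρ : G →* AddAut M) (q : ℕ) : AddSubgroup ((Fin (q + 1) → G) → M) :=
  eqCochain ρ q ⊓ (cochainD G M q).ker

/-- Coboundaries: differentials of equivariant cochains (interpreted as `⊥` in degree 0). -/
def coboundaries (ρ : G →* AddAut M) : (q : ℕ) → AddSubgroup ((Fin (q + 1) → G) → M)
  | 0 => ⊥
  | (n + 1) => (eqCochain ρ n).map (cochainD G M n)

/-- The `q`-th group cohomology of `G` with coefficients in `M`, the action being given by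
`ρ : G →* AddAut M`; defined via the homogeneous cochain complex. -/
def GroupCohomology (ρ : G →* AddAut M) (q : ℕ) : Type :=
  cocycles ρ q ⧸ ((coboundaries ρ q ⊓ cocycles ρ q).addSubgroupOf (cocycles ρ q))

noncomputable instance (ρ : G →* AddAut M) (q : ℕ) : AddCommGroup (GroupCohomology ρ q) := by
  unfold GroupCohomology; infer_instance

/-- Precomposition of cochains with a group homomorphism. -/
def cochainRes (φ : G' →* G) (M : Type) [AddCommGroup M] (q : ℕ) :
    ((Fin (q + 1) → G) → M) →+ ((Fin (q + 1) → G') → M) where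
  toFun f g := f fun i => φ (g i)
  map_zero' := rfl
  map_add' a b := rfl

theorem cochainRes_comm_d (φ : G' →* G) (q : ℕ) (f : (Fin (q + 1) → G) → M) :
    cochainRes φ M (q + 1) (cochainD G M q f) = cochainD G' M q (cochainRes φ M q f) := rfl

theorem cochainRes_mem_eqCochain (φ : G' →* G) (ρ : G →* AddAut M) (ρ' : G' →* AddAut M)
    (hcomp : ∀ x, ρ' x = ρ (φ x)) (q : ℕ) (f : (Fin (q + 1) → G) → M)
    (hf : f ∈ eqCochain ρ q) : cochainRes φ M q f ∈ eqCochain ρ' q := by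
  intro n g
  have := hf (φ n) (fun i => φ (g i))
  simpa [cochainRes, hcomp, map_mul] using this

theorem cochainRes_mem_cocycles (φ : G' →* G) (ρ : G →* AddAut M) (ρ' : G' →* AddAut M)
    (hcomp : ∀ x, ρ' x = ρ (φ x)) (q : ℕ) (f : (Fin (q + 1) → G) → M)
    (hf : f ∈ cocycles ρ q) : cochainRes φ M q f ∈ cocycles ρ' q := by
  constructor
  · exact cochainRes_mem_eqCochain φ ρ ρ' hcomp q f hf.1
  · show cochainD G' M q (cochainRes φ M q f) = 0
    rw [← cochainRes_comm_d]
    have : cochainD G M q f = 0 := hf.2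
    rw [this]
    rfl

/-- Cocycle-level restriction. -/
def cocycleRes (φ : G' →* G) (ρ : G →* AddAut M) (ρ' : G' →* AddAut M)
    (hcomp : ∀ x, ρ' x = ρ (φ x)) (q : ℕ) : cocycles ρ q →+ cocycles ρ' q :=
  AddMonoidHom.codRestrict ((cochainRes φ M q).comp (cocycles ρ q).subtype) _
    (fun f => cochainRes_mem_cocycles φ ρ ρ' hcomp q f f.2)

theorem cochainRes_mem_coboundaries (φ : G' →* G) (ρ : G →* AddAut M) (ρ' : G' →* AddAut M)
    (hcomp : ∀ x, ρ' x = ρ (φ x)) (q : ℕ) (f : (Fin (q + 1) → G) → M)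
    (hf : f ∈ coboundaries ρ q) : cochainRes φ M q f ∈ coboundaries ρ' q := by
  match q with
  | 0 =>
    have : f = 0 := hf
    subst this
    show cochainRes φ M 0 0 ∈ (⊥ : AddSubgroup _)
    simp [map_zero]
  | (n + 1) =>
    obtain ⟨u, hu, rfl⟩ := hf
    exact ⟨cochainRes φ M n u, cochainRes_mem_eqCochain φ ρ ρ' hcomp n u hu,
      (cochainRes_comm_d φ n u).symm⟩

/-- The restriction map in group cohomology along a homomorphism `φ : G' →* G`,
for compatible actions. -/
noncomputable def cohomologyRes (φ : G' →* G) (ρ : G →* AddAut M) (ρ' : G' →* AddAut M)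
    (hcomp : ∀ x, ρ' x = ρ (φ x)) (q : ℕ) :
    GroupCohomology ρ q →+ GroupCohomology ρ' q :=
  QuotientAddGroup.map _ _ (cocycleRes φ ρ ρ' hcomp q) (by
    intro x hx
    have h1 : (x : (Fin (q + 1) → G) → M) ∈ coboundaries ρ q ⊓ cocycles ρ q := hx
    refine ⟨cochainRes_mem_coboundaries φ ρ ρ' hcomp q _ h1.1, ?_⟩
    exact (cocycleRes φ ρ ρ' hcomp q x).2)

/-! ### Chains and homology -/

/-- The boundary map on homogeneous chains. -/
noncomputable def chainB (G : Type) [Group G] (M : Type) [AddCommGroup M] (q : ℕ) :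
    ((Fin (q + 2) → G) →₀ M) →+ ((Fin (q + 1) → G) →₀ M) :=
  ∑ i : Fin (q + 2), (-1 : ℤ) ^ (i : ℕ) •
    (Finsupp.mapDomain.addMonoidHom fun g : Fin (q + 2) → G => g ∘ i.succAbove)

/-- The diagonal action of `G` on homogeneous chains. -/
noncomputable def chainAct (ρ : G →* AddAut M) (q : ℕ) (n : G) :
    ((Fin (q + 1) → G) →₀ M) →+ ((Fin (q + 1) → G) →₀ M) :=
  (Finsupp.mapDomain.addMonoidHom fun g : Fin (q + 1) → G => fun i => n * g i).comp
    (Finsupp.mapRange.addMonoidHom (ρ n).toAddMonoidHom)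

/-- The subgroup of chains by which we quotient to obtain coinvariants. -/
noncomputable def coinvRel (ρ : G →* AddAut M) (q : ℕ) :
    AddSubgroup ((Fin (q + 1) → G) →₀ M) :=
  AddSubgroup.closure
    {y | ∃ (n : G) (x : (Fin (q + 1) → G) →₀ M), y = x - chainAct ρ q n x}

/-- Coinvariants of the homogeneous chains. -/
def CoinvChain (ρ : G →* AddAut M) (q : ℕ) : Type :=
  ((Fin (q + 1) → G) →₀ M) ⧸ coinvRel ρ q

noncomputable instance (ρ : G →* AddAut M) (q : ℕ) : AddCommGroup (CoinvChain ρ q) := by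
  unfold CoinvChain; infer_instance

theorem chainB_comm_act (ρ : G →* AddAut M) (q : ℕ) (n : G) :
    (chainB G M q).comp (chainAct ρ (q + 1) n) = (chainAct ρ q n).comp (chainB G M q) := by
  ext g m
  simp [chainB, chainAct, Finsupp.mapDomain_single, AddMonoidHom.finset_sum_apply,
    Finsupp.mapRange_single]
  rfl

/-- The boundary map descends to coinvariants. -/
noncomputable def coinvB (ρ : G →* AddAut M) (q : ℕ) :
    CoinvChain ρ (q + 1) →+ CoinvChain ρ q :=
  QuotientAddGroup.map _ _ (chainB G M q) (by
    rw [coinvRel, AddSubgroup.closure_le]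
    rintro y ⟨n, x, rfl⟩
    show chainB G M q (x - chainAct ρ (q + 1) n x) ∈ coinvRel ρ q
    rw [map_sub]
    have : chainB G M q (chainAct ρ (q + 1) n x) = chainAct ρ q n (chainB G M q x) := by
      have := chainB_comm_act ρ q n
      exact congrFun (congrArg (fun (h : _ →+ _) => (h : _ → _)) this) x
    rw [this]
    exact AddSubgroup.subset_closure ⟨n, chainB G M q x, rfl⟩)

/-- Cycles of the coinvariant chain complex. -/
noncomputable def hcycles (ρ : G →* AddAut M) : (q : ℕ) → AddSubgroup (CoinvChain ρ q)
  | 0 => ⊤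
  | (n + 1) => (coinvB ρ n).ker

/-- Boundaries of the coinvariant chain complex. -/
noncomputable def hboundaries (ρ : G →* AddAut M) (q : ℕ) : AddSubgroup (CoinvChain ρ q) :=
  (coinvB ρ q).range

/-- The `q`-th group homology of `G` with coefficients in `M`, the action being given by
`ρ : G →* AddAut M`; defined via the homogeneous chain complex. -/
def GroupHomology (ρ : G →* AddAut M) (q : ℕ) : Type :=
  hcycles ρ q ⧸ ((hboundaries ρ q ⊓ hcycles ρ q).addSubgroupOf (hcycles ρ q))

noncomputable instance (ρ : G →* AddAut M) (q : ℕ) : AddCommGroup (GroupHomology ρ q) := by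
  unfold GroupHomology; infer_instance

/-- The chain-level map induced by a group homomorphism. -/
noncomputable def chainCores (φ : G' →* G) (M : Type) [AddCommGroup M] (q : ℕ) :
    ((Fin (q + 1) → G') →₀ M) →+ ((Fin (q + 1) → G) →₀ M) :=
  Finsupp.mapDomain.addMonoidHom fun g : Fin (q + 1) → G' => fun i => φ (g i)

theorem chainCores_comm_B (φ : G' →* G) (q : ℕ) :
    (chainB G M q).comp (chainCores φ M (q + 1)) =
      (chainCores φ M q).comp (chainB G' M q) := by
  ext g m
  simp [chainB, chainCores, Finsupp.mapDomain_single, AddMonoidHom.finset_sum_apply]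
  rfl

theorem chainCores_comm_act (φ : G' →* G) (ρ : G →* AddAut M) (ρ' : G' →* AddAut M)
    (hcomp : ∀ x, ρ' x = ρ (φ x)) (q : ℕ) (n : G') :
    (chainCores φ M q).comp (chainAct ρ' q n) =
      (chainAct ρ q (φ n)).comp (chainCores φ M q) := by
  ext g m
  simp [chainAct, chainCores, Finsupp.mapDomain_single, Finsupp.mapRange_single, hcomp,
    map_mul]

/-- The chain-level map descends to coinvariants. -/
noncomputable def coinvCores (φ : G' →* G) (ρ : G →* AddAut M) (ρ' : G' →* AddAut M)
    (hcomp : ∀ x, ρ' x = ρ (φ x)) (q : ℕ) : CoinvChain ρ' q →+ CoinvChain ρ q :=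
  QuotientAddGroup.map _ _ (chainCores φ M q) (by
    rw [coinvRel, AddSubgroup.closure_le]
    rintro y ⟨n, x, rfl⟩
    show chainCores φ M q (x - chainAct ρ' q n x) ∈ coinvRel ρ q
    rw [map_sub]
    have : chainCores φ M q (chainAct ρ' q n x) =
        chainAct ρ q (φ n) (chainCores φ M q x) := by
      have := chainCores_comm_act φ ρ ρ' hcomp q n
      exact congrFun (congrArg (fun (h : _ →+ _) => (h : _ → _)) this) x
    rw [this]
    exact AddSubgroup.subset_closure ⟨φ n, chainCores φ M q x, rfl⟩)

theorem coinvCores_comm_B (φ : G' →* G) (ρ : G →* AddAut M) (ρ' : G' →* AddAut M)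
    (hcomp : ∀ x, ρ' x = ρ (φ x)) (q : ℕ) (x : CoinvChain ρ' (q + 1)) :
    coinvB ρ q (coinvCores φ ρ ρ' hcomp (q + 1) x) =
      coinvCores φ ρ ρ' hcomp q (coinvB ρ' q x) := by
  induction x using QuotientAddGroup.induction_on with
  | H z =>
    have hraw := DFunLike.congr_fun (chainCores_comm_B (M := M) φ q) z
    simp only [AddMonoidHom.comp_apply] at hraw
    show coinvB ρ q (coinvCores φ ρ ρ' hcomp (q + 1) (QuotientAddGroup.mk z)) =
      coinvCores φ ρ ρ' hcomp q (coinvB ρ' q (QuotientAddGroup.mk z))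
    simp only [coinvB, coinvCores, QuotientAddGroup.map_mk]
    exact congrArg QuotientAddGroup.mk hraw

theorem coinvCores_mem_hcycles (φ : G' →* G) (ρ : G →* AddAut M) (ρ' : G' →* AddAut M)
    (hcomp : ∀ x, ρ' x = ρ (φ x)) (q : ℕ) (x : CoinvChain ρ' q) (hx : x ∈ hcycles ρ' q) :
    coinvCores φ ρ ρ' hcomp q x ∈ hcycles ρ q := by
  match q with
  | 0 => trivial
  | (n + 1) =>
    show coinvB ρ n (coinvCores φ ρ ρ' hcomp (n + 1) x) = 0
    rw [coinvCores_comm_B φ ρ ρ' hcomp n x]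
    have : coinvB ρ' n x = 0 := hx
    rw [this, map_zero]

/-- Cycle-level corestriction. -/
noncomputable def cycleCores (φ : G' →* G) (ρ : G →* AddAut M) (ρ' : G' →* AddAut M)
    (hcomp : ∀ x, ρ' x = ρ (φ x)) (q : ℕ) : hcycles ρ' q →+ hcycles ρ q :=
  AddMonoidHom.codRestrict ((coinvCores φ ρ ρ' hcomp q).comp (hcycles ρ' q).subtype) _
    (fun x => coinvCores_mem_hcycles φ ρ ρ' hcomp q x x.2)

/-- The corestriction map in group homology along a homomorphism `φ : G' →* G`,
for compatible actions. -/
noncomputable def homologyCores (φ : G' →* G) (ρ : G →* AddAut M) (ρ' : G' →* AddAut M)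
    (hcomp : ∀ x, ρ' x = ρ (φ x)) (q : ℕ) :
    GroupHomology ρ' q →+ GroupHomology ρ q :=
  QuotientAddGroup.map _ _ (cycleCores φ ρ ρ' hcomp q) (by
    intro x hx
    have h1 : (x : CoinvChain ρ' q) ∈ hboundaries ρ' q ⊓ hcycles ρ' q := hx
    refine ⟨?_, (cycleCores φ ρ ρ' hcomp q x).2⟩
    obtain ⟨y, hy⟩ := h1.1
    exact ⟨coinvCores φ ρ ρ' hcomp (q + 1) y, by
      show coinvB ρ q _ = _
      rw [coinvCores_comm_B φ ρ ρ' hcomp q y, hy]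
      rfl⟩)

end HomogeneousResolution

namespace ZMod

variable (n : ℕ) [NeZero n]

noncomputable def toRatCircle : ZMod n →+ AddCircle (1 : ℚ) :=
  lift n ⟨AddMonoidHom.mk' (fun j ↦ ↑(j / n : ℚ)) (by simp [add_div]), by simp⟩

lemma toRatCircle_intCast (j : ℤ) : toRatCircle n j = ↑(j / n : ℚ) := by
  simp [toRatCircle]

lemma toRatCircle_injective : Function.Injective (toRatCircle n) := by
  rw [injective_iff_map_eq_zero]
  intro x hx
  obtain ⟨j, rfl⟩ := intCast_surjective x
  obtain ⟨k, hk⟩ := (AddCircle.coe_eq_zero_iff _).mp ((toRatCircle_intCast n j).symm.trans hx)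
  rw [zsmul_eq_mul, mul_one, eq_div_iff (Nat.cast_ne_zero.mpr (NeZero.ne n))] at hk
  exact (intCast_zmod_eq_zero_iff_dvd j n).mpr
    ⟨k, by exact_mod_cast hk.symm.trans (mul_comm _ _)⟩

lemma exists_toRatCircle_eq {u : AddCircle (1 : ℚ)} (hu : n • u = 0) :
    ∃ k : ZMod n, toRatCircle n k = u := by
  obtain ⟨y, rfl⟩ := QuotientAddGroup.mk_surjective u
  obtain ⟨k, hk⟩ :=
    (AddCircle.coe_eq_zero_iff _).mp ((AddCircle.coe_nsmul (p := (1 : ℚ))).trans hu)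
  rw [zsmul_eq_mul, mul_one, nsmul_eq_mul] at hk
  refine ⟨k, ?_⟩
  rw [toRatCircle_intCast, hk, mul_div_cancel_left₀ _ (Nat.cast_ne_zero.mpr (NeZero.ne n))]

noncomputable def characterEquiv : ZMod n ≃+ (ZMod n →+ AddCircle (1 : ℚ)) :=
  AddEquiv.ofBijective ((AddMonoidHom.compHom (toRatCircle n)).comp AddMonoidHom.mul) <| by
    refine ⟨(injective_iff_map_eq_zero _).mpr fun k hk => ?_, fun ψ => ?_⟩
    · apply toRatCircle_injective n
      simpa using DFunLike.congr_fun hk 1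
    · have hψ : n • ψ 1 = 0 := by
        rw [← map_nsmul, nsmul_eq_mul, mul_one, natCast_self, map_zero]
      obtain ⟨k, hk⟩ := exists_toRatCircle_eq n hψ
      refine ⟨k, AddMonoidHom.ext fun x => ?_⟩
      obtain ⟨j, rfl⟩ := intCast_surjective x
      rw [← zsmul_one (R := ZMod n) j, map_zsmul, map_zsmul]
      simp [hk]

end ZMod

theorem AddCommGroup.nonempty_addEquiv_addMonoidHom_ratCircle (M : Type*) [AddCommGroup M]
    [Finite M] : Nonempty (M ≃+ (M →+ AddCircle (1 : ℚ))) := by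
  classical
  obtain ⟨ι, _, n, hn, ⟨e⟩⟩ := AddCommGroup.equiv_directSum_zmod_of_finite' M
  have (i : ι) : NeZero (n i) := ⟨by have := hn i; omega⟩
  exact ⟨e.trans <| (DirectSum.addEquivProd _).trans <|
    (AddEquiv.piCongrRight fun i => ZMod.characterEquiv (n i)).trans <|
    DFinsupp.liftAddHom.trans e.symm.addMonoidHomCongrLeft⟩

lemma AddSubgroup.exists_ratCircle_extension_of_subquotient {B : Type*} [AddCommGroup B]
    (S T : AddSubgroup B) (χ : S ⧸ (T ⊓ S).addSubgroupOf S →+ AddCircle (1 : ℚ)) :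
    ∃ ψ : B →+ AddCircle (1 : ℚ), T ≤ ψ.ker ∧
      ∀ s : S, ψ s = χ (QuotientAddGroup.mk s : S ⧸ (T ⊓ S).addSubgroupOf S) := by
  let ι : S ⧸ (T ⊓ S).addSubgroupOf S →+ B ⧸ T :=
    QuotientAddGroup.map _ _ S.subtype fun s hs => hs.1
  have hι : Function.Injective ι := by
    rw [injective_iff_map_eq_zero]
    rintro ⟨s⟩ hs
    exact (QuotientAddGroup.eq_zero_iff _).mpr ⟨(QuotientAddGroup.eq_zero_iff _).mp hs, s.2⟩
  obtain ⟨ψ, hψ⟩ :=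
    (Module.Baer.of_divisible (AddCircle (1 : ℚ))).extension_property_addMonoidHom ι hι χ
  refine ⟨ψ.comp (QuotientAddGroup.mk' T), fun t ht => ?_, fun s => ?_⟩
  · simp [(QuotientAddGroup.eq_zero_iff t).mpr ht]
  · exact DFunLike.congr_fun hψ (QuotientAddGroup.mk s)

section Pairing

variable {G G' : Type} {A M D : Type} [AddCommGroup A] [AddCommGroup M] [AddCommGroup D]
  (e : A ≃+ (M →+ D))

noncomputable def cochainPairing (q : ℕ) :
    ((Fin (q + 1) → G) → A) ≃+ (((Fin (q + 1) → G) →₀ M) →+ D) :=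
  (AddEquiv.piCongrRight fun _ => e).trans Finsupp.liftAddHom

@[simp]
lemma cochainPairing_single (q : ℕ) (f : (Fin (q + 1) → G) → A) (g : Fin (q + 1) → G)
    (m : M) :
    cochainPairing e q f (Finsupp.single g m) = e (f g) m := by
  simp [cochainPairing]

variable [Group G] [Group G']

lemma cochainPairing_cochainD (q : ℕ) (f : (Fin (q + 1) → G) → A) :
    cochainPairing e (q + 1) (cochainD G A q f) = (cochainPairing e q f).comp (chainB G M q) := by
  ext g m
  simp [cochainD, chainB, Finsupp.mapDomain_single]

lemma cochainPairing_cochainRes (φ : G' →* G) (q : ℕ) (f : (Fin (q + 1) → G) → A) :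
    cochainPairing e q (cochainRes φ A q f) = (cochainPairing e q f).comp (chainCores φ M q) := by
  ext g m
  simp [cochainRes, chainCores, Finsupp.mapDomain_single]

lemma cochainPairing_comp_chainAct (q : ℕ) (f : (Fin (q + 1) → G) → A) (n : G) :
    (cochainPairing e q f).comp (chainAct (1 : G →* AddAut M) q n) =
      cochainPairing e q fun g => f fun i => n * g i := by
  ext g m
  simp only [chainAct, AddMonoidHom.comp_apply, Finsupp.singleAddHom_apply,
    Finsupp.mapRange.addMonoidHom_apply, Finsupp.mapRange_single,
    Finsupp.mapDomain.addMonoidHom_apply, Finsupp.mapDomain_single, cochainPairing_single]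
  rfl

lemma mem_eqCochain_one_iff (q : ℕ) (f : (Fin (q + 1) → G) → A) :
    f ∈ eqCochain (1 : G →* AddAut A) q ↔
      coinvRel (1 : G →* AddAut M) q ≤ (cochainPairing e q f).ker := by
  rw [coinvRel, AddSubgroup.closure_le]
  constructor
  · rintro hf _ ⟨n, x, rfl⟩
    have hinv : (fun g => f fun i => n * g i) = f := funext (hf n)
    simp [← AddMonoidHom.comp_apply, cochainPairing_comp_chainAct, hinv]
  · intro h n g
    have hinv : cochainPairing e q (fun g => f fun i => n * g i) = cochainPairing e q f := by
      rw [← cochainPairing_comp_chainAct]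
      refine AddMonoidHom.ext fun x => ?_
      have hx : cochainPairing e q f (x - chainAct 1 q n x) = 0 := h ⟨n, x, rfl⟩
      rw [map_sub, sub_eq_zero] at hx
      exact hx.symm
    exact congrFun ((cochainPairing e q).injective hinv) g

lemma cochainPairing_eq_zero_of_mem_coboundaries {q : ℕ} {f : (Fin (q + 1) → G) → A}
    (hf : f ∈ coboundaries (1 : G →* AddAut A) q) {w : (Fin (q + 1) → G) →₀ M}
    (hw : (QuotientAddGroup.mk w : CoinvChain (1 : G →* AddAut M) q) ∈ hcycles 1 q) :
    cochainPairing e q f w = 0 := by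
  cases q with
  | zero => rw [show f = 0 from hf, map_zero, AddMonoidHom.zero_apply]
  | succ q =>
    obtain ⟨u, hu, rfl⟩ := hf
    have hbw : chainB G M q w ∈ coinvRel 1 q := (QuotientAddGroup.eq_zero_iff _).mp hw
    rw [cochainPairing_cochainD, AddMonoidHom.comp_apply]
    exact (mem_eqCochain_one_iff e q u).mp hu hbw

lemma exists_mem_cocycles_cochainPairing_eq {q : ℕ}
    (χ : CoinvChain (1 : G →* AddAut M) q →+ D) (hχ : hboundaries 1 q ≤ χ.ker) :
    ∃ f ∈ cocycles (1 : G →* AddAut A) q,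
      cochainPairing e q f = χ.comp (QuotientAddGroup.mk' _) := by
  set f := (cochainPairing e q).symm (χ.comp (QuotientAddGroup.mk' _))
  have hf : cochainPairing e q f = χ.comp (QuotientAddGroup.mk' _) :=
    (cochainPairing e q).apply_symm_apply _
  refine ⟨f, ⟨?_, ?_⟩, hf⟩
  · show f ∈ eqCochain 1 q
    rw [mem_eqCochain_one_iff e, hf]
    intro x hx
    exact (congrArg χ ((QuotientAddGroup.eq_zero_iff x).mpr hx)).trans χ.map_zero
  · show cochainD G A q f = 0
    apply (cochainPairing e (q + 1)).injective
    rw [cochainPairing_cochainD, hf, map_zero]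
    exact AddMonoidHom.ext fun w => hχ ⟨QuotientAddGroup.mk w, rfl⟩

end Pairing

section Cores

variable {G G' : Type} [Group G] [Group G'] {A M : Type} [AddCommGroup A] [AddCommGroup M]

theorem homologyCores_eq_zero_of_cohomologyRes_eq_zero (φ : G' →* G)
    (e : A ≃+ (M →+ AddCircle (1 : ℚ))) (q : ℕ)
    (hres : ∀ x, cohomologyRes φ (1 : G →* AddAut A) 1 (fun _ => rfl) q x = 0)
    (y : GroupHomology (1 : G' →* AddAut M) q) :
    homologyCores φ 1 1 (fun _ => rfl) q y = 0 := by
  by_contra hy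
  obtain ⟨c, hc⟩ := CharacterModule.exists_character_apply_ne_zero_of_ne_zero hy
  obtain ⟨χ, hχB, hχZ⟩ := AddSubgroup.exists_ratCircle_extension_of_subquotient _ _ c
  obtain ⟨f, hf, hfχ⟩ := exists_mem_cocycles_cochainPairing_eq e χ hχB
  have hres_f : cochainRes φ A q f ∈ coboundaries 1 q :=
    (AddSubgroup.mem_addSubgroupOf.mp
      ((QuotientAddGroup.eq_zero_iff _).mp (hres (QuotientAddGroup.mk ⟨f, hf⟩)))).1
  obtain ⟨z, rfl⟩ := QuotientAddGroup.mk_surjective y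
  obtain ⟨w, hw⟩ := QuotientAddGroup.mk_surjective (z : CoinvChain (1 : G' →* AddAut M) q)
  apply hc
  calc c (homologyCores φ 1 1 (fun _ => rfl) q (QuotientAddGroup.mk z))
      = χ (coinvCores φ 1 1 (fun _ => rfl) q z) := (hχZ _).symm
    _ = cochainPairing e q f (chainCores φ M q w) := by rw [hfχ, ← hw]; rfl
    _ = cochainPairing e q (cochainRes φ A q f) w := by rw [cochainPairing_cochainRes]; rfl
    _ = 0 := cochainPairing_eq_zero_of_mem_coboundaries e hres_f (hw ▸ z.2)

end Cores

theorem homology_cores_zero_of_cohomology_res_zero_general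
    (N : Type) [Group N] (N' : Subgroup N) (q : ℕ)
    (M : Type) [AddCommGroup M] [Finite M]
    (hres : ∀ x : GroupCohomology (1 : N →* AddAut M) q,
      cohomologyRes N'.subtype (1 : N →* AddAut M) (1 : (↥N') →* AddAut M)
        (fun _ => rfl) q x = 0) :
    ∀ y : GroupHomology (1 : (↥N') →* AddAut M) q,
      homologyCores N'.subtype (1 : N →* AddAut M) (1 : (↥N') →* AddAut M)
        (fun _ => rfl) q y = 0 := by
  obtain ⟨e⟩ := AddCommGroup.nonempty_addEquiv_addMonoidHom_ratCircle M
  exact homologyCores_eq_zero_of_cohomologyRes_eq_zero N'.subtype e q hres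

/-- If `M` is a finite abelian group, viewed as a trivial module over a group `N` and a
subgroup `N' ≤ N`, the relevant integral homology groups are finitely generated, and the
restriction map `H^q(N, M) → H^q(N', M)` is zero, then the corestriction map
`H_q(N', M) → H_q(N, M)` induced by the inclusion is zero. -/
theorem homology_cores_zero_of_cohomology_res_zero
    (N : Type) [Group N] (N' : Subgroup N) (q : ℕ) (hq : 1 ≤ q)
    (M : Type) [AddCommGroup M] [Finite M]
    (hfgN : AddGroup.FG (GroupHomology (1 : N →* AddAut ℤ) q))
    (hfgN1 : AddGroup.FG (GroupHomology (1 : N →* AddAut ℤ) (q - 1)))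
    (hfgN' : AddGroup.FG (GroupHomology (1 : (↥N') →* AddAut ℤ) q))
    (hfgN'1 : AddGroup.FG (GroupHomology (1 : (↥N') →* AddAut ℤ) (q - 1)))
    (hres : ∀ x : GroupCohomology (1 : N →* AddAut M) q,
      cohomologyRes N'.subtype (1 : N →* AddAut M) (1 : (↥N') →* AddAut M)
        (fun _ => rfl) q x = 0) :
    ∀ y : GroupHomology (1 : (↥N') →* AddAut M) q,
      homologyCores N'.subtype (1 : N →* AddAut M) (1 : (↥N') →* AddAut M)
        (fun _ => rfl) q y = 0 :=
  homology_cores_zero_of_cohomology_res_zero_general N N' q M hres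
end
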